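/- Let b₀, b₁ be reals with 0 < b₁ ≤ b₀ and b₀ + b₁ < 1, let μ* be the (b₀,b₁)-branching measure on C, and let T be the associated capacity (with T(∅) = 0). Let Q₀, Q₁ ⊆ 2^ℕ be closed (possibly empty), let i⌢Qᵢ = {i⌢x : x ∈ Qᵢ} for i = 0,1, and let Q = 0⌢Q₀ ∪ 1⌢Q₁. Then with q₀ = T(Q₀) and q₁ = T(Q₁), T(Q) = (1 − b₁)q₀ + (1 − b₀)q₁ − (1 − (b₀ + b₁))·q₀·q₁. -/

import Mathlib

open Set MeasureTheory Topology Filter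

/-- Cantor space `2^ℕ`. -/
abbrev Cantor : Type := ℕ → Bool

/-- The basic interval `I(σ)` of all extensions of the finite binary string `σ`. -/
def cyl (σ : List Bool) : Set Cantor :=
  {x | ∀ i : Fin σ.length, x i = σ.get i}

/-- The space `C` of nonempty closed subsets of Cantor space. -/
abbrev CC : Type := {K : Set Cantor // K.Nonempty ∧ IsClosed K}

/-- The hit-or-miss topology on `C`, generated by the sets
`V(U) = {K : K ∩ U ≠ ∅}` and `W(U) = {K : K ⊆ U}` for `U` open. -/
instance (priority := 10000) hitMissTop : TopologicalSpace CC :=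
  TopologicalSpace.generateFrom
    ({S | ∃ U : Set Cantor, IsOpen U ∧ S = {K : CC | (K.1 ∩ U).Nonempty}} ∪
     {S | ∃ U : Set Cantor, IsOpen U ∧ S = {K : CC | K.1 ⊆ U}})

/-- The Borel σ-algebra of the hit-or-miss topology. -/
instance (priority := 10000) hitMissMeasurable : MeasurableSpace CC := borel CC

/-- `A` is a finite tree of height `n` without dead ends. -/
def FinTree (n : ℕ) (A : Finset (List Bool)) : Prop :=
  A.Nonempty ∧
  (∀ σ ∈ A, σ.length ≤ n) ∧
  (∀ σ τ : List Bool, σ <+: τ → τ ∈ A → σ ∈ A) ∧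
  (∀ σ ∈ A, σ.length < n → σ ++ [false] ∈ A ∨ σ ++ [true] ∈ A)

/-- `U_A = {K ∈ C : T_K ∩ {0,1}^{≤ n} = A}`. -/
def UA (n : ℕ) (A : Finset (List Bool)) : Set CC :=
  {K | ∀ σ : List Bool, σ.length ≤ n → (σ ∈ A ↔ (K.1 ∩ cyl σ).Nonempty)}

/-- The weight of a node `σ` of `A` in the symmetric branching process with parameter `β`. -/
noncomputable def symWeight (β : List Bool → ℝ) (A : Finset (List Bool)) (σ : List Bool) : ℝ :=
  if σ ++ [false] ∈ A ∧ σ ++ [true] ∈ A then 1 - 2 * β σ else β σ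

/-- `μ` is the symmetric branching measure on `C` with parameter `β`. -/
def IsSymBranching (β : List Bool → ℝ) (μ : Measure CC) : Prop :=
  IsProbabilityMeasure μ ∧
  ∀ (n : ℕ) (A : Finset (List Bool)), FinTree n A →
    (μ (UA n A)).toReal = ∏ σ ∈ A.filter (fun σ => σ.length < n), symWeight β A σ

/-- The weight of a node `σ` of `A` in the `(b₀,b₁)`-branching process. -/
noncomputable def asymWeight (b0 b1 : ℝ) (A : Finset (List Bool)) (σ : List Bool) : ℝ :=
  if σ ++ [false] ∈ A ∧ σ ++ [true] ∈ A then 1 - b0 - b1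
  else if σ ++ [false] ∈ A then b0 else b1

/-- `μ` is the `(b₀,b₁)`-branching measure on `C`. -/
def IsBranching (b0 b1 : ℝ) (μ : Measure CC) : Prop :=
  IsProbabilityMeasure μ ∧
  ∀ (n : ℕ) (A : Finset (List Bool)), FinTree n A →
    (μ (UA n A)).toReal = ∏ σ ∈ A.filter (fun σ => σ.length < n), asymWeight b0 b1 A σ

/-- The capacity `T(Q) = μ*({K ∈ C : K ∩ Q ≠ ∅})` associated to a measure on `C`. -/
noncomputable def cap (μ : Measure CC) (Q : Set Cantor) : ℝ :=
  (μ {K : CC | (K.1 ∩ Q).Nonempty}).toReal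

/-- The sequence `i⌢x`. -/
def consSeq (i : Bool) (x : Cantor) : Cantor
  | 0 => i
  | n + 1 => x n

/-- The set `i⌢Q = {i⌢x : x ∈ Q}`. -/
def consSet (i : Bool) (Q : Set Cantor) : Set Cantor := consSeq i '' Q

/-!
Approximate a closed set `Q` by the union `cylCover n Q` of the length-`n` cylinders meeting it.
These sets decrease to `Q`, so by compactness of the random set `K` the events
`K ∩ cylCover n Q ≠ ∅` decrease to `K ∩ Q ≠ ∅`, and `T(Q)` is the limit of their probabilities.
The probability that `K` misses a finite set `S` of strings of length `n` is a finite sum over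
the trees of height `n` (`missProb`). Cutting a tree of height `n + 1` at its root into its two
subtrees, each a tree of height `n` or empty, gives `p = b₀ p₀ + b₁ p₁ + (1 - b₀ - b₁) p₀ p₁`,
where `pᵢ` is the miss probability of the strings `τ` with `i :: τ ∈ S`. For `S` the level
`n + 1` of `0⌢Q₀ ∪ 1⌢Q₁` these are the levels `n` of `Q₀` and `Q₁`; letting `n → ∞` with
`p = 1 - T(Q)` and `pᵢ = 1 - qᵢ` gives the formula.
-/

lemma mem_cyl_iff {x : Cantor} {σ : List Bool} :
    x ∈ cyl σ ↔ ∀ (i : ℕ) (h : i < σ.length), x i = σ[i] := by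
  simp [cyl, Fin.forall_iff]

lemma cyl_nil : cyl [] = univ := by
  ext x; simp [mem_cyl_iff]

lemma cyl_anti {σ τ : List Bool} (h : σ <+: τ) : cyl τ ⊆ cyl σ := by
  intro x hx
  rw [mem_cyl_iff] at hx ⊢
  intro i hi
  rw [hx i (hi.trans_le h.length_le), h.getElem]

lemma inter_cyl_nonempty_of_prefix {K : Set Cantor} {σ τ : List Bool} (h : σ <+: τ)
    (hK : (K ∩ cyl τ).Nonempty) : (K ∩ cyl σ).Nonempty :=
  hK.mono (inter_subset_inter_right _ (cyl_anti h))

lemma cyl_eq_pi (σ : List Bool) :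
    cyl σ = (Finset.range σ.length : Set ℕ).pi fun i => {σ.getD i false} := by
  ext x
  simp only [mem_cyl_iff, Set.mem_pi, Finset.coe_range, Set.mem_Iio, Set.mem_singleton_iff]
  exact forall_congr' fun i => ⟨fun h hi => by simp [h hi, hi], fun h hi => by simp [h hi, hi]⟩

lemma isClopen_cyl (σ : List Bool) : IsClopen (cyl σ) := by
  rw [cyl_eq_pi]
  exact ⟨isClosed_set_pi fun _ _ => isClosed_discrete _,
    isOpen_set_pi (Finset.finite_toSet _) fun _ _ => isOpen_discrete _⟩

lemma cyl_eq_cylinder {x : Cantor} {σ : List Bool} (hx : x ∈ cyl σ) :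
    cyl σ = PiNat.cylinder x σ.length := by
  rw [mem_cyl_iff] at hx
  ext y
  rw [mem_cyl_iff, PiNat.mem_cylinder_iff]
  exact forall₂_congr fun i hi => by rw [hx i hi]

lemma mem_cyl_ofFn (x : Cantor) (n : ℕ) : x ∈ cyl (List.ofFn fun i : Fin n => x i) := by
  simp [mem_cyl_iff]

lemma mem_cyl_append_apply_length {x : Cantor} {σ : List Bool} (hx : x ∈ cyl σ) :
    x ∈ cyl (σ ++ [x σ.length]) := by
  rw [mem_cyl_iff] at hx ⊢
  intro i hi
  rw [List.getElem_append]
  split_ifs with h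
  · exact hx i h
  · obtain rfl : i = σ.length := by simp at hi; omega
    simp

lemma consSeq_mem_cyl_cons {i j : Bool} {x : Cantor} {τ : List Bool} :
    consSeq i x ∈ cyl (j :: τ) ↔ i = j ∧ x ∈ cyl τ := by
  show (∀ k : Fin (τ.length + 1), _) ↔ _
  rw [Fin.forall_fin_succ]
  simp [consSeq, cyl]

open scoped Classical in
/-- `T_K ∩ {0,1}^{≤ n}`. -/
noncomputable def treeOf (n : ℕ) (K : Set Cantor) : Finset (List Bool) :=
  {σ ∈ (List.finite_length_le Bool n).toFinset | (K ∩ cyl σ).Nonempty}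

lemma mem_treeOf {n : ℕ} {K : Set Cantor} {σ : List Bool} :
    σ ∈ treeOf n K ↔ σ.length ≤ n ∧ (K ∩ cyl σ).Nonempty := by
  simp [treeOf]

lemma finTree_treeOf (n : ℕ) {K : Set Cantor} (hK : K.Nonempty) : FinTree n (treeOf n K) := by
  refine ⟨⟨[], mem_treeOf.2 ⟨Nat.zero_le _, by simpa [cyl_nil] using hK⟩⟩,
    fun σ hσ => (mem_treeOf.1 hσ).1, fun σ τ hστ hτ => ?_, fun σ hσ hlt => ?_⟩
  · obtain ⟨hlen, hK⟩ := mem_treeOf.1 hτ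
    exact mem_treeOf.2 ⟨hστ.length_le.trans hlen, inter_cyl_nonempty_of_prefix hστ hK⟩
  · obtain ⟨-, x, hxK, hxσ⟩ := mem_treeOf.1 hσ
    have hmem : σ ++ [x σ.length] ∈ treeOf n K :=
      mem_treeOf.2 ⟨by simpa using hlt, x, hxK, mem_cyl_append_apply_length hxσ⟩
    cases h : x σ.length
    · exact .inl (h ▸ hmem)
    · exact .inr (h ▸ hmem)

noncomputable def level (n : ℕ) (Q : Set Cantor) : Finset (List Bool) :=
  {σ ∈ treeOf n Q | σ.length = n}

lemma mem_level {n : ℕ} {Q : Set Cantor} {σ : List Bool} :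
    σ ∈ level n Q ↔ σ.length = n ∧ (Q ∩ cyl σ).Nonempty := by
  simp only [level, Finset.mem_filter, mem_treeOf]
  exact ⟨fun h => ⟨h.2, h.1.2⟩, fun h => ⟨⟨h.1.le, h.2⟩, h.1⟩⟩

lemma nil_notMem_level (n : ℕ) (Q : Set Cantor) : [] ∉ level (n + 1) Q := by
  simp [mem_level]

section Graft

variable {S A A₀ A₁ : Finset (List Bool)}

noncomputable def subtree (i : Bool) (S : Finset (List Bool)) : Finset (List Bool) :=
  S.preimage (List.cons i) List.cons_injective.injOn

@[simp] lemma mem_subtree {i : Bool} {τ : List Bool} : τ ∈ subtree i S ↔ i :: τ ∈ S :=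
  Finset.mem_preimage

/-- An empty `Aᵢ` means that the root has no child `[i]`. -/
def graft (A₀ A₁ : Finset (List Bool)) : Finset (List Bool) :=
  insert [] (A₀.image (List.cons false) ∪ A₁.image (List.cons true))

@[simp] lemma nil_mem_graft : [] ∈ graft A₀ A₁ :=
  Finset.mem_insert_self _ _

@[simp] lemma cons_mem_graft {i : Bool} {τ : List Bool} :
    i :: τ ∈ graft A₀ A₁ ↔ τ ∈ cond i A₁ A₀ := by
  cases i <;> simp [graft]

@[simp] lemma subtree_graft (i : Bool) : subtree i (graft A₀ A₁) = cond i A₁ A₀ := by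
  ext τ; simp

lemma graft_subtree (hA : [] ∈ A) : graft (subtree false A) (subtree true A) = A := by
  ext (_ | ⟨i, τ⟩)
  · simpa using hA
  · cases i <;> simp

lemma prod_graft {M : Type*} [CommMonoid M] (f : List Bool → M) (A₀ A₁ : Finset (List Bool)) :
    ∏ σ ∈ graft A₀ A₁, f σ =
      f [] * ((∏ τ ∈ A₀, f (false :: τ)) * ∏ τ ∈ A₁, f (true :: τ)) := by
  rw [graft, Finset.prod_insert (by simp), Finset.prod_union, Finset.prod_image, Finset.prod_image]
  · exact List.cons_injective.injOn
  · exact List.cons_injective.injOn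
  · simp [Finset.disjoint_left]

lemma filter_graft (n : ℕ) (A₀ A₁ : Finset (List Bool)) :
    {σ ∈ graft A₀ A₁ | σ.length < n + 1} =
      graft {τ ∈ A₀ | τ.length < n} {τ ∈ A₁ | τ.length < n} := by
  ext (_ | ⟨i, τ⟩)
  · simp
  · cases i <;> simp

lemma disjoint_graft (hS : [] ∉ S) :
    Disjoint S (graft A₀ A₁) ↔
      Disjoint (subtree false S) A₀ ∧ Disjoint (subtree true S) A₁ := by
  simp only [Finset.disjoint_left, mem_subtree]
  constructor
  · intro h
    exact ⟨fun τ hτ hA => h hτ (by simpa), fun τ hτ hA => h hτ (by simpa)⟩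
  · rintro ⟨h₀, h₁⟩ (_ | ⟨i, τ⟩) hσ hA
    · exact hS hσ
    · cases i
      · exact h₀ hσ (by simpa using hA)
      · exact h₁ hσ (by simpa using hA)

end Graft

section Trees

variable {n : ℕ} {A A₀ A₁ : Finset (List Bool)}

lemma FinTree.nil_mem (h : FinTree n A) : [] ∈ A := by
  obtain ⟨σ, hσ⟩ := h.1
  exact h.2.2.1 [] σ List.nil_prefix hσ

lemma finTree_graft (h₀ : A₀ = ∅ ∨ FinTree n A₀) (h₁ : A₁ = ∅ ∨ FinTree n A₁)
    (hne : ¬(A₀ = ∅ ∧ A₁ = ∅)) : FinTree (n + 1) (graft A₀ A₁) := by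
  have h (i : Bool) : cond i A₁ A₀ = ∅ ∨ FinTree n (cond i A₁ A₀) := by
    cases i <;> assumption
  refine ⟨⟨[], nil_mem_graft⟩, ?_, ?_, ?_⟩
  · rintro (_ | ⟨i, τ⟩) hτ
    · simp
    · rw [cons_mem_graft] at hτ
      rcases h i with hA | hA
      · simp [hA] at hτ
      · simpa using hA.2.1 τ hτ
  · rintro (_ | ⟨i, σ⟩) (_ | ⟨j, τ⟩) hστ hτ
    · exact nil_mem_graft
    · exact nil_mem_graft
    · simp at hστ
    · obtain ⟨rfl, hστ'⟩ := List.cons_prefix_cons.1 hστ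
      rw [cons_mem_graft] at hτ ⊢
      rcases h i with hA | hA
      · simp [hA] at hτ
      · exact hA.2.2.1 σ τ hστ' hτ
  · rintro (_ | ⟨i, τ⟩) hτ hlt
    · obtain ⟨i, hA⟩ : ∃ i, FinTree n (cond i A₁ A₀) := by
        by_cases hA₀ : A₀ = ∅
        · exact ⟨true, (h true).resolve_left (by simpa [hA₀] using hne)⟩
        · exact ⟨false, (h false).resolve_left hA₀⟩
      have : [i] ∈ graft A₀ A₁ := cons_mem_graft.2 hA.nil_mem
      cases i
      · exact .inl this
      · exact .inr this
    · rw [cons_mem_graft] at hτ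
      rcases h i with hA | hA
      · simp [hA] at hτ
      · simpa using hA.2.2.2 τ hτ (by simpa using hlt)

lemma FinTree.subtree_eq_empty_or (h : FinTree (n + 1) A) (i : Bool) :
    subtree i A = ∅ ∨ FinTree n (subtree i A) := by
  by_cases hi : [i] ∈ A
  · refine .inr ⟨⟨[], mem_subtree.2 hi⟩, fun τ hτ => ?_, fun σ τ hστ hτ => ?_,
      fun τ hτ hlt => ?_⟩
    · simpa using h.2.1 _ (mem_subtree.1 hτ)
    · exact mem_subtree.2
        (h.2.2.1 _ _ (List.cons_prefix_cons.2 ⟨rfl, hστ⟩) (mem_subtree.1 hτ))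
    · simpa using h.2.2.2 _ (mem_subtree.1 hτ) (by simpa using hlt)
  · refine .inl (Finset.eq_empty_of_forall_notMem fun τ hτ => hi ?_)
    exact h.2.2.1 [i] (i :: τ) (List.cons_prefix_cons.2 ⟨rfl, List.nil_prefix⟩)
      (mem_subtree.1 hτ)

lemma FinTree.not_subtrees_eq_empty (h : FinTree (n + 1) A) :
    ¬(subtree false A = ∅ ∧ subtree true A = ∅) := by
  rintro ⟨h₀, h₁⟩
  rcases h.2.2.2 [] h.nil_mem (Nat.succ_pos n) with hi | hi
  · simpa [h₀] using (mem_subtree (S := A)).2 hi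
  · simpa [h₁] using (mem_subtree (S := A)).2 hi

end Trees

open scoped Classical in
noncomputable def trees (n : ℕ) : Finset (Finset (List Bool)) :=
  {A ∈ (List.finite_length_le Bool n).toFinset.powerset | FinTree n A}

lemma mem_trees {n : ℕ} {A : Finset (List Bool)} : A ∈ trees n ↔ FinTree n A := by
  simp only [trees, Finset.mem_filter, Finset.mem_powerset, and_iff_right_iff_imp]
  intro h σ hσ
  simpa using h.2.1 σ hσ

lemma empty_notMem_trees (n : ℕ) : ∅ ∉ trees n := fun h =>
  Finset.not_nonempty_empty (mem_trees.1 h).1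

lemma trees_succ (n : ℕ) :
    trees (n + 1) = ((insert ∅ (trees n) ×ˢ insert ∅ (trees n)).erase (∅, ∅)).image
      fun p => graft p.1 p.2 := by
  ext A
  simp only [Finset.mem_image, Finset.mem_erase, Finset.mem_product, Finset.mem_insert,
    mem_trees, Prod.exists, ne_eq, Prod.mk.injEq]
  constructor
  · intro h
    exact ⟨subtree false A, subtree true A, ⟨h.not_subtrees_eq_empty,
      h.subtree_eq_empty_or false, h.subtree_eq_empty_or true⟩, graft_subtree h.nil_mem⟩
  · rintro ⟨A₀, A₁, ⟨hne, h₀, h₁⟩, rfl⟩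
    exact finTree_graft h₀ h₁ hne

lemma sum_trees_succ {M : Type*} [AddCommGroup M] (n : ℕ) (f : Finset (List Bool) → M) :
    ∑ A ∈ trees (n + 1), f A =
      ∑ A ∈ trees n, f (graft A ∅) + ∑ A ∈ trees n, f (graft ∅ A) +
        ∑ A₀ ∈ trees n, ∑ A₁ ∈ trees n, f (graft A₀ A₁) := by
  have hinj : Function.Injective fun p : Finset (List Bool) × Finset (List Bool) =>
      graft p.1 p.2 := fun p q hpq =>
    Prod.ext (by simpa using congrArg (subtree false) hpq)
      (by simpa using congrArg (subtree true) hpq)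
  rw [trees_succ, Finset.sum_image hinj.injOn, Finset.sum_erase_eq_sub (by simp),
    Finset.sum_product, Finset.sum_insert (empty_notMem_trees n),
    Finset.sum_insert (empty_notMem_trees n)]
  simp only [Finset.sum_add_distrib, Finset.sum_insert (empty_notMem_trees n)]
  abel

section Weights

variable (b0 b1 : ℝ) {n : ℕ} {S A A₀ A₁ : Finset (List Bool)}

noncomputable def treeWeight (n : ℕ) (A : Finset (List Bool)) : ℝ :=
  ∏ σ ∈ A with σ.length < n, asymWeight b0 b1 A σ

lemma asymWeight_graft_cons {i : Bool} {τ : List Bool} :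
    asymWeight b0 b1 (graft A₀ A₁) (i :: τ) = asymWeight b0 b1 (cond i A₁ A₀) τ := by
  simp [asymWeight]

lemma asymWeight_graft_nil :
    asymWeight b0 b1 (graft A₀ A₁) [] =
      if [] ∈ A₀ ∧ [] ∈ A₁ then 1 - b0 - b1 else if [] ∈ A₀ then b0 else b1 := by
  simp [asymWeight]

lemma treeWeight_graft :
    treeWeight b0 b1 (n + 1) (graft A₀ A₁) =
      asymWeight b0 b1 (graft A₀ A₁) [] *
        (treeWeight b0 b1 n A₀ * treeWeight b0 b1 n A₁) := by
  rw [treeWeight, filter_graft, prod_graft]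
  simp only [asymWeight_graft_cons, cond_false, cond_true]
  rfl

@[simp] lemma treeWeight_empty : treeWeight b0 b1 n ∅ = 1 := by
  simp [treeWeight]

noncomputable def missWeight (n : ℕ) (S A : Finset (List Bool)) : ℝ :=
  if Disjoint S A then treeWeight b0 b1 n A else 0

noncomputable def missProb (n : ℕ) (S : Finset (List Bool)) : ℝ :=
  ∑ A ∈ trees n, missWeight b0 b1 n S A

@[simp] lemma missWeight_empty : missWeight b0 b1 n S ∅ = 1 := by
  simp [missWeight]

lemma missWeight_graft (hS : [] ∉ S) :
    missWeight b0 b1 (n + 1) S (graft A₀ A₁) = asymWeight b0 b1 (graft A₀ A₁) [] *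
      (missWeight b0 b1 n (subtree false S) A₀ * missWeight b0 b1 n (subtree true S) A₁) := by
  simp only [missWeight, disjoint_graft hS, treeWeight_graft]
  split_ifs <;> simp_all

lemma missProb_succ (hS : [] ∉ S) :
    missProb b0 b1 (n + 1) S =
      b0 * missProb b0 b1 n (subtree false S) + b1 * missProb b0 b1 n (subtree true S) +
        (1 - b0 - b1) *
          (missProb b0 b1 n (subtree false S) * missProb b0 b1 n (subtree true S)) := by
  simp only [missProb, sum_trees_succ, missWeight_graft _ _ hS, asymWeight_graft_nil]
  have hnil {A} (hA : A ∈ trees n) : [] ∈ A := (mem_trees.1 hA).nil_mem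
  congr 1; congr 1
  · rw [Finset.mul_sum]
    exact Finset.sum_congr rfl fun A hA => by simp [hnil hA]
  · rw [Finset.mul_sum]
    exact Finset.sum_congr rfl fun A hA => by simp [hnil hA]
  · rw [Finset.sum_mul_sum, Finset.mul_sum]
    refine Finset.sum_congr rfl fun A₀ hA₀ => ?_
    rw [Finset.mul_sum]
    exact Finset.sum_congr rfl fun A₁ hA₁ => by simp [hnil hA₀, hnil hA₁]

end Weights

instance : BorelSpace CC := ⟨rfl⟩

lemma isOpen_setOf_inter_nonempty {U : Set Cantor} (hU : IsOpen U) :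
    IsOpen {K : CC | (K.1 ∩ U).Nonempty} :=
  TopologicalSpace.isOpen_generateFrom_of_mem (Or.inl ⟨U, hU, rfl⟩)

lemma isClosed_setOf_inter_nonempty {F : Set Cantor} (hF : IsClosed F) :
    IsClosed {K : CC | (K.1 ∩ F).Nonempty} := by
  have : {K : CC | (K.1 ∩ F).Nonempty}ᶜ = {K : CC | K.1 ⊆ Fᶜ} := by
    ext K
    simp [Set.subset_compl_iff_disjoint_right, Set.not_nonempty_iff_eq_empty,
      Set.disjoint_iff_inter_eq_empty]
  rw [← isOpen_compl_iff, this]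
  exact TopologicalSpace.isOpen_generateFrom_of_mem (Or.inr ⟨Fᶜ, hF.isOpen_compl, rfl⟩)

lemma measurableSet_UA (n : ℕ) (A : Finset (List Bool)) : MeasurableSet (UA n A) := by
  have : UA n A = ⋂ (σ : List Bool) (_ : σ.length ≤ n),
      {K : CC | σ ∈ A ↔ (K.1 ∩ cyl σ).Nonempty} := by
    ext K; simp [UA]
  rw [this]
  refine .iInter fun σ => .iInter fun _ => measurableSet_setOfPred.2 (measurable_const.iff ?_)
  exact measurableSet_setOfPred.1
    (isOpen_setOf_inter_nonempty (isClopen_cyl σ).isOpen).measurableSet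

lemma UA_eq {n : ℕ} {A : Finset (List Bool)} (hA : ∀ σ ∈ A, σ.length ≤ n) :
    UA n A = {K : CC | treeOf n K.1 = A} := by
  ext K
  simp only [UA, Set.mem_ofPred_eq, Finset.ext_iff, mem_treeOf]
  refine ⟨fun h σ => ?_, fun h σ hσ => by rw [← h]; simp [hσ]⟩
  by_cases hσ : σ.length ≤ n
  · rw [h σ hσ]; simp [hσ]
  · exact ⟨fun h' => absurd h'.1 hσ, fun h' => absurd (hA σ h') hσ⟩

namespace IsBranching

variable {b0 b1 : ℝ} {μ : Measure CC}

lemma measureReal_setOf_treeOf (hμ : IsBranching b0 b1 μ) (n : ℕ)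
    (p : Finset (List Bool) → Prop) [DecidablePred p] :
    μ.real {K : CC | p (treeOf n K.1)} = ∑ A ∈ trees n with p A, treeWeight b0 b1 n A := by
  have hlen {A} (hA : A ∈ trees n) : ∀ σ ∈ A, σ.length ≤ n := (mem_trees.1 hA).2.1
  have hunion : {K : CC | p (treeOf n K.1)} = ⋃ A ∈ (trees n).filter p, UA n A := by
    ext K
    simp only [Set.mem_ofPred_eq, Set.mem_iUnion, Finset.mem_filter, exists_prop]
    refine ⟨fun h => ⟨_, ⟨mem_trees.2 (finTree_treeOf n K.2.1), h⟩, ?_⟩, ?_⟩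
    · rw [UA_eq fun σ hσ => (mem_treeOf.1 hσ).1]; rfl
    · rintro ⟨A, ⟨hA, hpA⟩, hK⟩
      rw [UA_eq (hlen hA)] at hK
      exact (show treeOf n K.1 = A from hK) ▸ hpA
  have := hμ.1
  rw [hunion, measureReal_biUnion_finset _ fun A _ => measurableSet_UA n A]
  · exact Finset.sum_congr rfl fun A hA => hμ.2 n A (mem_trees.1 (Finset.mem_filter.1 hA).1)
  · intro A hA B hB hAB
    simp only [Finset.coe_filter, Set.mem_ofPred_eq] at hA hB
    rw [Function.onFun, UA_eq (hlen hA.1), UA_eq (hlen hB.1)]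
    exact Set.disjoint_left.2 fun K hKA hKB => hAB (hKA.symm.trans hKB)

lemma measureReal_setOf_disjoint (hμ : IsBranching b0 b1 μ) (n : ℕ) (S : Finset (List Bool)) :
    μ.real {K : CC | Disjoint S (treeOf n K.1)} = missProb b0 b1 n S := by
  rw [hμ.measureReal_setOf_treeOf, Finset.sum_filter]
  rfl

end IsBranching

def cylCover (n : ℕ) (Q : Set Cantor) : Set Cantor := ⋃ σ ∈ level n Q, cyl σ

lemma isClosed_cylCover (n : ℕ) (Q : Set Cantor) : IsClosed (cylCover n Q) :=
  isClosed_biUnion_finset fun σ _ => (isClopen_cyl σ).isClosed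

lemma antitone_cylCover (Q : Set Cantor) : Antitone fun n => cylCover n Q := by
  refine antitone_nat_of_succ_le fun n x hx => ?_
  obtain ⟨σ, hσ, hxσ⟩ := Set.mem_iUnion₂.1 hx
  obtain ⟨hlen, hQ⟩ := mem_level.1 hσ
  have hpre : σ.take n <+: σ := List.take_prefix n σ
  exact Set.mem_biUnion (mem_level.2 ⟨by simp [hlen], inter_cyl_nonempty_of_prefix hpre hQ⟩)
    (cyl_anti hpre hxσ)

lemma iInter_cylCover {Q : Set Cantor} (hQ : IsClosed Q) : ⋂ n, cylCover n Q = Q := by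
  refine Set.Subset.antisymm (fun x hx => ?_) fun x hx => Set.mem_iInter.2 fun n => ?_
  · by_contra hxQ
    obtain ⟨n, hn⟩ := PiNat.exists_disjoint_cylinder hQ hxQ
    obtain ⟨σ, hσ, hxσ⟩ := Set.mem_iUnion₂.1 (Set.mem_iInter.1 hx n)
    obtain ⟨hlen, hQσ⟩ := mem_level.1 hσ
    rw [cyl_eq_cylinder hxσ, hlen] at hQσ
    exact hQσ.not_disjoint hn
  · exact Set.mem_biUnion (mem_level.2 ⟨by simp, x, hx, mem_cyl_ofFn x n⟩) (mem_cyl_ofFn x n)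

lemma setOf_inter_cylCover_nonempty (n : ℕ) (Q : Set Cantor) :
    {K : CC | (K.1 ∩ cylCover n Q).Nonempty} =
      {K : CC | Disjoint (level n Q) (treeOf n K.1)}ᶜ := by
  ext K
  simp only [cylCover, Set.inter_iUnion₂, Set.nonempty_iUnion, Set.mem_compl_iff,
    Set.mem_ofPred_eq, Finset.not_disjoint_iff, mem_treeOf, exists_prop]
  exact exists_congr fun σ =>
    ⟨fun h => ⟨h.1, (mem_level.1 h.1).1.le, h.2⟩, fun h => ⟨h.1, h.2.2⟩⟩

lemma IsBranching.cap_cylCover {b0 b1 : ℝ} {μ : Measure CC} (hμ : IsBranching b0 b1 μ)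
    (n : ℕ) (Q : Set Cantor) : cap μ (cylCover n Q) = 1 - missProb b0 b1 n (level n Q) := by
  have := hμ.1
  have hmeas : MeasurableSet {K : CC | Disjoint (level n Q) (treeOf n K.1)} := by
    rw [← compl_compl {K : CC | _}, ← setOf_inter_cylCover_nonempty]
    exact (isClosed_setOf_inter_nonempty (isClosed_cylCover n Q)).measurableSet.compl
  rw [cap, setOf_inter_cylCover_nonempty, ← Measure.real, measureReal_compl hmeas,
    hμ.measureReal_setOf_disjoint, probReal_univ]

lemma tendsto_cap_iInter (μ : Measure CC) [IsFiniteMeasure μ] {F : ℕ → Set Cantor}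
    (hF : ∀ n, IsClosed (F n)) (hanti : Antitone F) :
    Tendsto (fun n => cap μ (F n)) atTop (𝓝 (cap μ (⋂ n, F n))) := by
  have hinter : ⋂ n, {K : CC | (K.1 ∩ F n).Nonempty} =
      {K : CC | (K.1 ∩ ⋂ n, F n).Nonempty} := by
    refine Set.Subset.antisymm (fun K hK => ?_) fun K ⟨x, hxK, hxF⟩ =>
      Set.mem_iInter.2 fun n => ⟨x, hxK, Set.mem_iInter.1 hxF n⟩
    show (K.1 ∩ ⋂ n, F n).Nonempty
    rw [Set.inter_iInter]
    exact IsCompact.nonempty_iInter_of_sequence_nonempty_isCompact_isClosed _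
      (fun n => Set.inter_subset_inter_right _ (hanti n.le_succ)) (Set.mem_iInter.1 hK)
      (K.2.2.inter (hF 0)).isCompact fun n => K.2.2.inter (hF n)
  have h := tendsto_measure_iInter_atTop
    (fun n => (isClosed_setOf_inter_nonempty (hF n)).measurableSet.nullMeasurableSet)
    (fun m n hmn K hK => hK.mono (Set.inter_subset_inter_right _ (hanti hmn)))
    ⟨0, measure_ne_top μ _⟩
  rw [hinter] at h
  exact (ENNReal.tendsto_toReal (measure_ne_top μ _)).comp h

lemma continuous_consSeq (i : Bool) : Continuous (consSeq i) :=
  continuous_pi fun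
    | 0 => continuous_const
    | k + 1 => continuous_apply k

lemma IsClosed.consSet {Q : Set Cantor} (hQ : IsClosed Q) (i : Bool) : IsClosed (consSet i Q) :=
  (hQ.isCompact.image (continuous_consSeq i)).isClosed

lemma consSet_inter_cyl_cons_nonempty {i j : Bool} {Q : Set Cantor} {τ : List Bool} :
    (consSet i Q ∩ cyl (j :: τ)).Nonempty ↔ i = j ∧ (Q ∩ cyl τ).Nonempty := by
  simp only [consSet, Set.image_inter_nonempty_iff, Set.preimage, consSeq_mem_cyl_cons]
  exact ⟨fun ⟨x, hx, hij, hxτ⟩ => ⟨hij, x, hx, hxτ⟩,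
    fun ⟨hij, x, hx, hxτ⟩ => ⟨x, hx, hij, hxτ⟩⟩

lemma subtree_level_consSet (n : ℕ) (Q₀ Q₁ : Set Cantor) (i : Bool) :
    subtree i (level (n + 1) (consSet false Q₀ ∪ consSet true Q₁)) =
      level n (cond i Q₁ Q₀) := by
  ext τ
  simp only [mem_subtree, mem_level, List.length_cons, Nat.add_right_cancel_iff,
    Set.union_inter_distrib_right, Set.union_nonempty, consSet_inter_cyl_cons_nonempty]
  cases i <;> simp

theorem stmt_13_general (b0 b1 : ℝ)
    (μ : Measure CC) (hμ : IsBranching b0 b1 μ)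
    (Q0 Q1 : Set Cantor) (h0 : IsClosed Q0) (h1 : IsClosed Q1) :
    cap μ (consSet false Q0 ∪ consSet true Q1) =
      (1 - b1) * cap μ Q0 + (1 - b0) * cap μ Q1 -
        (1 - (b0 + b1)) * (cap μ Q0 * cap μ Q1) := by
  have := hμ.1
  have tendsto_cap {P : Set Cantor} (hP : IsClosed P) :
      Tendsto (fun n => cap μ (cylCover n P)) atTop (𝓝 (cap μ P)) := by
    simpa only [iInter_cylCover hP] using
      tendsto_cap_iInter μ (isClosed_cylCover · P) (antitone_cylCover P)
  have hrec (n : ℕ) : cap μ (cylCover (n + 1) (consSet false Q0 ∪ consSet true Q1)) =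
      (1 - b1) * cap μ (cylCover n Q0) + (1 - b0) * cap μ (cylCover n Q1) -
        (1 - (b0 + b1)) * (cap μ (cylCover n Q0) * cap μ (cylCover n Q1)) := by
    have h := missProb_succ b0 b1 (n := n)
      (nil_notMem_level n (consSet false Q0 ∪ consSet true Q1))
    simp only [subtree_level_consSet, cond_false, cond_true] at h
    rw [hμ.cap_cylCover, hμ.cap_cylCover, hμ.cap_cylCover, h]
    ring
  refine tendsto_nhds_unique ((tendsto_cap ((h0.consSet false).union (h1.consSet true))).comp
    (tendsto_add_atTop_nat 1)) ?_
  simp only [Function.comp_def, hrec]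
  exact (((tendsto_cap h0).const_mul _).add ((tendsto_cap h1).const_mul _)).sub
    (((tendsto_cap h0).mul (tendsto_cap h1)).const_mul _)

/-- the capacity of `Q = 0⌢Q₀ ∪ 1⌢Q₁` satisfies
`T(Q) = (1 − b₁)q₀ + (1 − b₀)q₁ − (1 − (b₀ + b₁))·q₀·q₁`. -/
theorem stmt_13 (b0 b1 : ℝ) (hb1 : 0 < b1) (hb01 : b1 ≤ b0) (hsum : b0 + b1 < 1)
    (μ : Measure CC) (hμ : IsBranching b0 b1 μ)
    (Q0 Q1 : Set Cantor) (h0 : IsClosed Q0) (h1 : IsClosed Q1) :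
    cap μ (consSet false Q0 ∪ consSet true Q1) =
      (1 - b1) * cap μ Q0 + (1 - b0) * cap μ Q1 -
        (1 - (b0 + b1)) * (cap μ Q0 * cap μ Q1) :=
  stmt_13_general b0 b1 μ hμ Q0 Q1 h0 h1
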